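/- Neither the graph G1 (a 12-cycle plus a vertex u adjacent to v1, v2, v6) nor the graph G2 (a 12-cycle plus an internal triangle joined by edges u1v1, u2v4, u3v7) contains a cycle of length 4, 5, or 8. -/

import Mathlib

/-!
A cycle of length `k` through `v` is a closed walk `v = x₀, x₁, …, x_k = v` whose vertices
`x₁, …, x_k` are distinct, so a depth-first search that extends walks only by unvisited vertices
finds every cycle. Run by the kernel, this search finds no such closed walk of length 4, 5 or 8
in either graph.
-/

/-- The graph `G1`: the 12-cycle `v1 … v12` (vertices `0, …, 11`) together with one
additional vertex `u` (vertex `12`) adjacent to `v1`, `v2`, `v6`. -/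
def G1 : SimpleGraph (Fin 13) :=
  SimpleGraph.fromRel (fun a b =>
    ((a : ℕ) < 12 ∧ (b : ℕ) < 12 ∧ (b : ℕ) = ((a : ℕ) + 1) % 12) ∨
    (a = 12 ∧ (b = 0 ∨ b = 1 ∨ b = 5)))

/-- The graph `G2`: the 12-cycle `v1 … v12` (vertices `0, …, 11`), a triangle
`u1 u2 u3` (vertices `12, 13, 14`), and the edges `u1 v1`, `u2 v4`, `u3 v7`. -/
def G2 : SimpleGraph (Fin 15) :=
  SimpleGraph.fromRel (fun a b =>
    ((a : ℕ) < 12 ∧ (b : ℕ) < 12 ∧ (b : ℕ) = ((a : ℕ) + 1) % 12) ∨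
    ((a = 12 ∧ b = 13) ∨ (a = 13 ∧ b = 14) ∨ (a = 14 ∧ b = 12)) ∨
    ((a = 12 ∧ b = 0) ∨ (a = 13 ∧ b = 3) ∨ (a = 14 ∧ b = 6)))

namespace SimpleGraph

variable {V : Type*} [Fintype V] [DecidableEq V] (G : SimpleGraph V) [DecidableRel G.Adj]

def pathSearch (t : V) : ℕ → V → List V → Bool
  | 0, c, _ => decide (c = t)
  | m + 1, c, visited =>
      decide (∃ w, G.Adj c w ∧ w ∉ visited ∧ pathSearch t m w (w :: visited) = true)

def cycleSearch (k : ℕ) : Bool :=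
  decide (∃ v, G.pathSearch v k v [] = true)

variable {G}

theorem Walk.pathSearch_length_eq_true {c t : V} (p : G.Walk c t) (hp : p.support.tail.Nodup)
    (visited : List V) (hvisited : ∀ x ∈ p.support.tail, x ∉ visited) :
    G.pathSearch t p.length c visited = true := by
  induction p generalizing visited with
  | nil => simp [pathSearch]
  | @cons c w t h q ih =>
    rw [support_cons, List.tail_cons, ← q.cons_tail_support, List.nodup_cons] at hp
    rw [support_cons, List.tail_cons, ← q.cons_tail_support] at hvisited
    refine decide_eq_true ⟨w, h, hvisited w List.mem_cons_self, ih hp.2 _ fun x hx => ?_⟩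
    rw [List.mem_cons, not_or]
    exact ⟨fun hxw => hp.1 (hxw ▸ hx), hvisited x (List.mem_cons_of_mem _ hx)⟩

theorem Walk.IsCycle.length_ne_of_cycleSearch_eq_false {k : ℕ} (hk : G.cycleSearch k = false)
    {v : V} {w : G.Walk v v} (hw : w.IsCycle) : w.length ≠ k := by
  rintro rfl
  simp only [cycleSearch, decide_eq_false_iff_not, not_exists] at hk
  exact hk v (w.pathSearch_length_eq_true hw.support_nodup [] (by simp))

end SimpleGraph

instance : DecidableRel G1.Adj := inferInstanceAs (DecidableRel (SimpleGraph.fromRel _).Adj)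

instance : DecidableRel G2.Adj := inferInstanceAs (DecidableRel (SimpleGraph.fromRel _).Adj)

/-- Neither `G1` nor `G2` contains a cycle of length 4, 5, or 8. -/
theorem stmt4 :
    (∀ (v : Fin 13) (w : G1.Walk v v), w.IsCycle →
      w.length ≠ 4 ∧ w.length ≠ 5 ∧ w.length ≠ 8) ∧
    (∀ (v : Fin 15) (w : G2.Walk v v), w.IsCycle →
      w.length ≠ 4 ∧ w.length ≠ 5 ∧ w.length ≠ 8) := by
  refine ⟨fun v w hw => ⟨?_, ?_, ?_⟩, fun v w hw => ⟨?_, ?_, ?_⟩⟩ <;>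
    exact hw.length_ne_of_cycleSearch_eq_false (by decide +kernel)
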